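/- Let ϖ > 0 and C ≥ 0, let b, N be positive integers with b ≥ 1, and set n = N·b. Then there is a constant K depending only on C and ϖ such that for every array a : {1,…,n} × {1,…,n} → ℝ satisfying |a(t₁, t₂)| ≤ C (|t₁ − t₂| ∨ 1)^{−2−ϖ} for all t₁, t₂, the block-diagonal approximation error satisfies (1/n) | Σ_{t₁,t₂ = 1}^n a(t₁, t₂) − Σ_{s=1}^N Σ_{t₁, t₂ = (s−1)b + 1}^{s b} a(t₁, t₂) | ≤ K / b. In particular the error tends to 0 as the block length b → ∞. -/

import Mathlib

open Filter Real

noncomputable section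


namespace Stmt15Aux

def S (ϖ : ℝ) : ℝ := ∑' k : ℕ, ((k : ℝ) + 1) ^ (-(1 + ϖ))

lemma S_nonneg (ϖ : ℝ) : 0 ≤ S ϖ :=
  tsum_nonneg fun _ => Real.rpow_nonneg (by positivity) _

lemma tile (b : ℤ) (hb : 0 < b) (p q : ℤ) :
    (Finset.Icc (p+1) q).biUnion (fun s => Finset.Icc ((s-1)*b+1) (s*b))
      = Finset.Icc (p*b+1) (q*b) := by
  ext t
  simp only [Finset.mem_biUnion, Finset.mem_Icc]
  constructor
  · rintro ⟨s, ⟨hp, hq⟩, h1, h2⟩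
    constructor
    · nlinarith
    · nlinarith
  · rintro ⟨h1, h2⟩
    refine ⟨(t-1)/b + 1, ⟨?_, ?_⟩, ?_, ?_⟩
    · have : p ≤ (t-1)/b := (Int.le_ediv_iff_mul_le hb).2 (by linarith)
      linarith
    · have : (t-1)/b < q := (Int.ediv_lt_iff_lt_mul hb).2 (by linarith)
      linarith
    · have h3 : 0 ≤ (t-1) % b := Int.emod_nonneg _ (ne_of_gt hb)
      nlinarith [Int.mul_ediv_add_emod (t-1) b]
    · have h4 : (t-1) % b < b := Int.emod_lt_of_pos _ hb
      nlinarith [Int.mul_ediv_add_emod (t-1) b]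

lemma blocks_disjoint (b : ℤ) (hb : 0 < b) (s : Finset ℤ) :
    (↑s : Set ℤ).PairwiseDisjoint (fun s => Finset.Icc ((s-1)*b+1) (s*b)) := by
  intro s₁ _ s₂ _ hne
  simp only [Function.onFun, Finset.disjoint_left, Finset.mem_Icc]
  rintro t ⟨h1, h2⟩ ⟨h3, h4⟩
  rcases lt_or_gt_of_ne hne with h | h
  · have : s₁ ≤ s₂ - 1 := by omega
    nlinarith
  · have : s₂ ≤ s₁ - 1 := by omega
    nlinarith

lemma summable_aux (ϖ : ℝ) (hϖ : 0 < ϖ) :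
    Summable (fun k : ℕ => ((k : ℝ) + 1) ^ (-(1 + ϖ))) := by
  have h : Summable (fun n : ℕ => ((n : ℝ) ^ (1 + ϖ))⁻¹) :=
    Real.summable_nat_rpow_inv.2 (by linarith)
  have h2 := (summable_nat_add_iff 1).2 h
  refine h2.congr fun k => ?_
  push_cast
  rw [← Real.rpow_neg (by positivity)]

lemma U_bound (ϖ C : ℝ) (hϖ : 0 < ϖ) (hC : 0 ≤ C) (n m : ℤ) :
    ∑ t₁ ∈ Finset.Icc 1 m, ∑ t₂ ∈ Finset.Icc (m+1) n,
      C * ((max |t₁ - t₂| 1 : ℤ) : ℝ) ^ (-(2 + ϖ)) ≤ C * S ϖ := by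
  classical
  rw [← Finset.sum_product']
  set s : Finset (ℤ × ℤ) := Finset.Icc 1 m ×ˢ Finset.Icc (m+1) n with hs
  have hmem : ∀ p ∈ s, 1 ≤ p.1 ∧ p.1 ≤ m ∧ m + 1 ≤ p.2 ∧ p.2 ≤ n := by
    intro p hp
    simp only [hs, Finset.mem_product, Finset.mem_Icc] at hp
    exact ⟨hp.1.1, hp.1.2, hp.2.1, hp.2.2⟩
  have hcongr : ∑ p ∈ s, C * ((max |p.1 - p.2| 1 : ℤ) : ℝ) ^ (-(2 + ϖ))
      = ∑ p ∈ s, (fun d : ℤ => C * ((d : ℤ) : ℝ) ^ (-(2 + ϖ))) (p.2 - p.1) := by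
    refine Finset.sum_congr rfl fun p hp => ?_
    obtain ⟨h1, h2, h3, h4⟩ := hmem p hp
    have hd : 1 ≤ p.2 - p.1 := by omega
    have : max |p.1 - p.2| 1 = p.2 - p.1 := by
      rw [abs_sub_comm, abs_of_nonneg (by omega)]
      omega
    rw [this]
  rw [hcongr, Finset.sum_comp (fun d : ℤ => C * ((d : ℤ) : ℝ) ^ (-(2 + ϖ)))
    (fun p : ℤ × ℤ => p.2 - p.1)]
  have himage : ∀ d ∈ s.image (fun p : ℤ × ℤ => p.2 - p.1), 1 ≤ d := by
    intro d hd
    obtain ⟨p, hp, hpd⟩ := Finset.mem_image.1 hd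
    obtain ⟨h1, h2, h3, h4⟩ := hmem p hp
    omega
  have step1 : ∀ d ∈ s.image (fun p : ℤ × ℤ => p.2 - p.1),
      (Finset.filter (fun p : ℤ × ℤ => p.2 - p.1 = d) s).card •
        (C * ((d : ℤ) : ℝ) ^ (-(2 + ϖ)))
      ≤ C * ((d : ℤ) : ℝ) ^ (-(1 + ϖ)) := by
    intro d hd
    have hd1 : 1 ≤ d := himage d hd
    have hcard : (Finset.filter (fun p : ℤ × ℤ => p.2 - p.1 = d) s).card
        ≤ (Finset.Icc (1:ℤ) d).card := by
      apply Finset.card_le_card_of_injOn (fun p => p.2 - m)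
      · intro p hp
        simp only [Finset.mem_coe, Finset.mem_filter] at hp
        obtain ⟨h1, h2, h3, h4⟩ := hmem p hp.1
        have := hp.2
        simp only [Finset.mem_coe, Finset.mem_Icc]
        omega
      · intro p hp q hq hpq
        simp only [Finset.mem_coe, Finset.mem_filter] at hp hq
        obtain ⟨hp1, hp2⟩ := hp
        obtain ⟨hq1, hq2⟩ := hq
        simp only at hpq
        have h2 : p.2 = q.2 := by omega
        have h1 : p.1 = q.1 := by omega
        exact Prod.ext h1 h2
    have hcardR : ((Finset.filter (fun p : ℤ × ℤ => p.2 - p.1 = d) s).card : ℝ)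
        ≤ (d : ℝ) := by
      rw [Int.card_Icc, show d + 1 - 1 = d by ring] at hcard
      calc ((Finset.filter (fun p : ℤ × ℤ => p.2 - p.1 = d) s).card : ℝ)
          ≤ (d.toNat : ℝ) := by exact_mod_cast hcard
        _ = (d : ℝ) := by
            have : (d.toNat : ℤ) = d := Int.toNat_of_nonneg (by omega)
            exact_mod_cast this
    have hdpos : (0:ℝ) < (d : ℝ) := by exact_mod_cast hd1.trans_lt' (by norm_num)
    have hfnonneg : (0:ℝ) ≤ C * ((d : ℤ) : ℝ) ^ (-(2 + ϖ)) := by positivity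
    rw [nsmul_eq_mul]
    calc ((Finset.filter (fun p : ℤ × ℤ => p.2 - p.1 = d) s).card : ℝ) *
          (C * ((d : ℤ) : ℝ) ^ (-(2 + ϖ)))
        ≤ (d : ℝ) * (C * ((d : ℤ) : ℝ) ^ (-(2 + ϖ))) :=
          mul_le_mul_of_nonneg_right hcardR hfnonneg
      _ = C * (((d:ℤ) : ℝ) ^ (1:ℝ) * ((d : ℤ) : ℝ) ^ (-(2 + ϖ))) := by
          rw [Real.rpow_one]; ring
      _ = C * ((d : ℤ) : ℝ) ^ (-(1 + ϖ)) := by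
          rw [← Real.rpow_add hdpos, show (1:ℝ) + -(2 + ϖ) = -(1 + ϖ) by ring]
  calc ∑ d ∈ s.image (fun p : ℤ × ℤ => p.2 - p.1),
        (Finset.filter (fun p : ℤ × ℤ => p.2 - p.1 = d) s).card •
          (C * ((d : ℤ) : ℝ) ^ (-(2 + ϖ)))
      ≤ ∑ d ∈ s.image (fun p : ℤ × ℤ => p.2 - p.1), C * ((d : ℤ) : ℝ) ^ (-(1 + ϖ)) :=
        Finset.sum_le_sum step1
    _ = C * ∑ d ∈ s.image (fun p : ℤ × ℤ => p.2 - p.1), ((d : ℤ) : ℝ) ^ (-(1 + ϖ)) := by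
        rw [Finset.mul_sum]
    _ ≤ C * S ϖ := by
        apply mul_le_mul_of_nonneg_left _ hC
        set D := s.image (fun p : ℤ × ℤ => p.2 - p.1) with hD
        have hinj : Set.InjOn (fun d : ℤ => (d - 1).toNat) ↑D := by
          intro d hd d' hd' h
          have h1 := himage d (by exact_mod_cast hd)
          have h2 := himage d' (by exact_mod_cast hd')
          simp only at h
          omega
        have : ∑ d ∈ D, ((d : ℤ) : ℝ) ^ (-(1 + ϖ))
            = ∑ k ∈ D.image (fun d : ℤ => (d - 1).toNat), ((k : ℝ) + 1) ^ (-(1 + ϖ)) := by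
          rw [Finset.sum_image hinj]
          refine Finset.sum_congr rfl fun d hd => ?_
          have h1 := himage d hd
          have h2 : ((d - 1).toNat : ℝ) = (d : ℝ) - 1 := by
            exact_mod_cast Int.toNat_of_nonneg (by omega : (0:ℤ) ≤ d - 1)
          rw [show (((d - 1).toNat : ℝ) + 1) = (d : ℝ) by rw [h2]; ring]
        rw [this]
        exact Summable.sum_le_tsum _ (fun k _ => Real.rpow_nonneg (by positivity) _)
          (summable_aux ϖ hϖ)

end Stmt15Aux

theorem Stmt15Aux.main (ϖ C : ℝ) (hϖ : 0 < ϖ) (hC : 0 ≤ C)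
    (hUB : ∀ n m : ℤ, ∑ t₁ ∈ Finset.Icc 1 m, ∑ t₂ ∈ Finset.Icc (m+1) n,
      C * ((max |t₁ - t₂| 1 : ℤ) : ℝ) ^ (-(2 + ϖ)) ≤ C * Stmt15Aux.S ϖ) :
    ∃ K : ℝ, ∀ b N : ℕ, 1 ≤ b → 1 ≤ N →
      ∀ a : ℤ → ℤ → ℝ,
        (∀ t₁ ∈ Finset.Icc (1:ℤ) ((N*b : ℕ) : ℤ), ∀ t₂ ∈ Finset.Icc (1:ℤ) ((N*b : ℕ) : ℤ),
          |a t₁ t₂| ≤ C * ((max |t₁ - t₂| 1 : ℤ) : ℝ) ^ (-(2 + ϖ))) →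
        ((N*b : ℕ) : ℝ)⁻¹ *
          |(∑ t₁ ∈ Finset.Icc (1:ℤ) ((N*b : ℕ) : ℤ),
              ∑ t₂ ∈ Finset.Icc (1:ℤ) ((N*b : ℕ) : ℤ), a t₁ t₂)
            - ∑ s ∈ Finset.Icc (1:ℤ) (N:ℤ),
                ∑ t₁ ∈ Finset.Icc ((s-1)*(b:ℤ)+1) (s*(b:ℤ)),
                  ∑ t₂ ∈ Finset.Icc ((s-1)*(b:ℤ)+1) (s*(b:ℤ)), a t₁ t₂|
          ≤ K / b := by
  classical
  refine ⟨2 * (C * Stmt15Aux.S ϖ), ?_⟩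
  intro b N hb hN a ha
  have hbZ : (0:ℤ) < (b:ℤ) := by exact_mod_cast hb
  have hNZ : (0:ℤ) < (N:ℤ) := by exact_mod_cast hN
  set g : ℤ → ℤ → ℝ := fun t₁ t₂ => C * ((max |t₁ - t₂| 1 : ℤ) : ℝ) ^ (-(2 + ϖ)) with hg
  have hg0 : ∀ t₁ t₂ : ℤ, 0 ≤ g t₁ t₂ := by
    intro t₁ t₂
    have h1 : (0:ℝ) < ((max |t₁ - t₂| 1 : ℤ) : ℝ) := by
      have : (1:ℤ) ≤ max |t₁ - t₂| 1 := le_max_right _ _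
      exact_mod_cast lt_of_lt_of_le zero_lt_one (by exact_mod_cast this)
    positivity
  have hgsymm : ∀ t₁ t₂ : ℤ, g t₁ t₂ = g t₂ t₁ := by
    intro t₁ t₂; simp only [hg, abs_sub_comm]
  set B : ℤ → Finset ℤ := fun s => Finset.Icc ((s-1)*(b:ℤ)+1) (s*(b:ℤ)) with hB
  have htile : ∀ p q : ℤ, (Finset.Icc (p+1) q).biUnion B
      = Finset.Icc (p*(b:ℤ)+1) (q*(b:ℤ)) := fun p q => Stmt15Aux.tile _ hbZ p q
  have hdisj : ∀ s : Finset ℤ, (↑s : Set ℤ).PairwiseDisjoint B :=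
    fun s => Stmt15Aux.blocks_disjoint _ hbZ s
  have hnn : ((N*b : ℕ) : ℤ) = (N:ℤ) * (b:ℤ) := by push_cast; ring
  have hI : Finset.Icc (1:ℤ) ((N*b : ℕ) : ℤ)
      = (Finset.Icc (1:ℤ) (N:ℤ)).biUnion B := by
    rw [show (1:ℤ) = 0 + 1 by ring, htile 0 (N:ℤ), hnn]
    norm_num
  -- subset of whole interval
  have hBsub : ∀ s₁ ∈ Finset.Icc (1:ℤ) (N:ℤ), B s₁ ⊆ Finset.Icc (1:ℤ) ((N*b : ℕ) : ℤ) := by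
    intro s₁ hs₁
    simp only [Finset.mem_Icc] at hs₁
    rw [hnn, hB]
    exact Finset.Icc_subset_Icc (by nlinarith [hs₁.1]) (by nlinarith [hs₁.2])
  -- rewrite full double sum
  have hfull : (∑ t₁ ∈ Finset.Icc (1:ℤ) ((N*b : ℕ) : ℤ),
        ∑ t₂ ∈ Finset.Icc (1:ℤ) ((N*b : ℕ) : ℤ), a t₁ t₂)
      = ∑ s₁ ∈ Finset.Icc (1:ℤ) (N:ℤ), ∑ s₂ ∈ Finset.Icc (1:ℤ) (N:ℤ),
          ∑ t₁ ∈ B s₁, ∑ t₂ ∈ B s₂, a t₁ t₂ := by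
    rw [hI, Finset.sum_biUnion (hdisj _)]
    refine Finset.sum_congr rfl fun s₁ _ => ?_
    calc ∑ t₁ ∈ B s₁, ∑ t₂ ∈ (Finset.Icc (1:ℤ) (N:ℤ)).biUnion B, a t₁ t₂
        = ∑ t₁ ∈ B s₁, ∑ s₂ ∈ Finset.Icc (1:ℤ) (N:ℤ), ∑ t₂ ∈ B s₂, a t₁ t₂ :=
          Finset.sum_congr rfl fun t₁ _ => Finset.sum_biUnion (hdisj _)
      _ = ∑ s₂ ∈ Finset.Icc (1:ℤ) (N:ℤ), ∑ t₁ ∈ B s₁, ∑ t₂ ∈ B s₂, a t₁ t₂ :=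
          Finset.sum_comm
  have hdiff : (∑ t₁ ∈ Finset.Icc (1:ℤ) ((N*b : ℕ) : ℤ),
        ∑ t₂ ∈ Finset.Icc (1:ℤ) ((N*b : ℕ) : ℤ), a t₁ t₂)
      - (∑ s ∈ Finset.Icc (1:ℤ) (N:ℤ), ∑ t₁ ∈ B s, ∑ t₂ ∈ B s, a t₁ t₂)
      = ∑ s₁ ∈ Finset.Icc (1:ℤ) (N:ℤ), ∑ s₂ ∈ (Finset.Icc (1:ℤ) (N:ℤ)).erase s₁,
          ∑ t₁ ∈ B s₁, ∑ t₂ ∈ B s₂, a t₁ t₂ := by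
    rw [hfull, ← Finset.sum_sub_distrib]
    refine Finset.sum_congr rfl fun s₁ hs₁ => ?_
    have := Finset.add_sum_erase (Finset.Icc (1:ℤ) (N:ℤ))
      (fun s₂ => ∑ t₁ ∈ B s₁, ∑ t₂ ∈ B s₂, a t₁ t₂) hs₁
    linarith [this]
  -- key per-s₁ bound
  have hkey : ∀ s₁ ∈ Finset.Icc (1:ℤ) (N:ℤ),
      ∑ s₂ ∈ (Finset.Icc (1:ℤ) (N:ℤ)).erase s₁, ∑ t₁ ∈ B s₁, ∑ t₂ ∈ B s₂, g t₁ t₂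
        ≤ 2 * (C * Stmt15Aux.S ϖ) := by
    intro s₁ hs₁
    simp only [Finset.mem_Icc] at hs₁
    have hsplit : (Finset.Icc (1:ℤ) (N:ℤ)).erase s₁
        = Finset.Icc (1:ℤ) (s₁-1) ∪ Finset.Icc (s₁+1) (N:ℤ) := by
      ext x
      simp only [Finset.mem_erase, Finset.mem_union, Finset.mem_Icc]
      omega
    have hdisj2 : Disjoint (Finset.Icc (1:ℤ) (s₁-1)) (Finset.Icc (s₁+1) (N:ℤ)) := by
      simp only [Finset.disjoint_left, Finset.mem_Icc]
      rintro x ⟨_, h2⟩ ⟨h3, _⟩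
      omega
    rw [hsplit, Finset.sum_union hdisj2]
    have hleft : ∑ s₂ ∈ Finset.Icc (1:ℤ) (s₁-1), ∑ t₁ ∈ B s₁, ∑ t₂ ∈ B s₂, g t₁ t₂
        ≤ C * Stmt15Aux.S ϖ := by
      have e1 : ∑ s₂ ∈ Finset.Icc (1:ℤ) (s₁-1), ∑ t₁ ∈ B s₁, ∑ t₂ ∈ B s₂, g t₁ t₂
          = ∑ t₁ ∈ B s₁, ∑ t₂ ∈ Finset.Icc (1:ℤ) ((s₁-1)*(b:ℤ)), g t₁ t₂ := by
        rw [Finset.sum_comm]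
        refine Finset.sum_congr rfl fun t₁ _ => ?_
        rw [show Finset.Icc (1:ℤ) (s₁-1) = Finset.Icc (0+1:ℤ) (s₁-1) by norm_num,
          ← Finset.sum_biUnion (hdisj _), htile 0 (s₁-1)]
        norm_num
      rw [e1]
      have hsub : B s₁ ⊆ Finset.Icc ((s₁-1)*(b:ℤ)+1) ((N:ℤ)*(b:ℤ)) := by
        rw [hB]
        exact Finset.Icc_subset_Icc le_rfl (by nlinarith [hs₁.2])
      have e2 : ∑ t₁ ∈ B s₁, ∑ t₂ ∈ Finset.Icc (1:ℤ) ((s₁-1)*(b:ℤ)), g t₁ t₂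
          ≤ ∑ t₁ ∈ Finset.Icc ((s₁-1)*(b:ℤ)+1) ((N:ℤ)*(b:ℤ)),
              ∑ t₂ ∈ Finset.Icc (1:ℤ) ((s₁-1)*(b:ℤ)), g t₁ t₂ := by
        refine Finset.sum_le_sum_of_subset_of_nonneg hsub fun t₁ _ _ => ?_
        exact Finset.sum_nonneg fun t₂ _ => hg0 t₁ t₂
      refine e2.trans ?_
      have e3 : ∑ t₁ ∈ Finset.Icc ((s₁-1)*(b:ℤ)+1) ((N:ℤ)*(b:ℤ)),
            ∑ t₂ ∈ Finset.Icc (1:ℤ) ((s₁-1)*(b:ℤ)), g t₁ t₂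
          = ∑ t₁ ∈ Finset.Icc (1:ℤ) ((s₁-1)*(b:ℤ)),
            ∑ t₂ ∈ Finset.Icc ((s₁-1)*(b:ℤ)+1) ((N:ℤ)*(b:ℤ)), g t₁ t₂ := by
        rw [Finset.sum_comm]
        exact Finset.sum_congr rfl fun t₂ _ => Finset.sum_congr rfl fun t₁ _ => hgsymm t₁ t₂
      rw [e3]
      exact hUB ((N:ℤ)*(b:ℤ)) ((s₁-1)*(b:ℤ))
    have hright : ∑ s₂ ∈ Finset.Icc (s₁+1) (N:ℤ), ∑ t₁ ∈ B s₁, ∑ t₂ ∈ B s₂, g t₁ t₂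
        ≤ C * Stmt15Aux.S ϖ := by
      have e1 : ∑ s₂ ∈ Finset.Icc (s₁+1) (N:ℤ), ∑ t₁ ∈ B s₁, ∑ t₂ ∈ B s₂, g t₁ t₂
          = ∑ t₁ ∈ B s₁, ∑ t₂ ∈ Finset.Icc (s₁*(b:ℤ)+1) ((N:ℤ)*(b:ℤ)), g t₁ t₂ := by
        rw [Finset.sum_comm]
        refine Finset.sum_congr rfl fun t₁ _ => ?_
        rw [← Finset.sum_biUnion (hdisj _), htile s₁ (N:ℤ)]
      rw [e1]
      have hsub : B s₁ ⊆ Finset.Icc (1:ℤ) (s₁*(b:ℤ)) := by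
        rw [hB]
        exact Finset.Icc_subset_Icc (by nlinarith [hs₁.1]) le_rfl
      have e2 : ∑ t₁ ∈ B s₁, ∑ t₂ ∈ Finset.Icc (s₁*(b:ℤ)+1) ((N:ℤ)*(b:ℤ)), g t₁ t₂
          ≤ ∑ t₁ ∈ Finset.Icc (1:ℤ) (s₁*(b:ℤ)),
              ∑ t₂ ∈ Finset.Icc (s₁*(b:ℤ)+1) ((N:ℤ)*(b:ℤ)), g t₁ t₂ := by
        refine Finset.sum_le_sum_of_subset_of_nonneg hsub fun t₁ _ _ => ?_
        exact Finset.sum_nonneg fun t₂ _ => hg0 t₁ t₂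
      exact e2.trans (hUB ((N:ℤ)*(b:ℤ)) (s₁*(b:ℤ)))
    linarith
  -- assemble
  have habs : |(∑ t₁ ∈ Finset.Icc (1:ℤ) ((N*b : ℕ) : ℤ),
        ∑ t₂ ∈ Finset.Icc (1:ℤ) ((N*b : ℕ) : ℤ), a t₁ t₂)
      - ∑ s ∈ Finset.Icc (1:ℤ) (N:ℤ), ∑ t₁ ∈ B s, ∑ t₂ ∈ B s, a t₁ t₂|
      ≤ (N:ℝ) * (2 * (C * Stmt15Aux.S ϖ)) := by
    rw [hdiff]
    calc |∑ s₁ ∈ Finset.Icc (1:ℤ) (N:ℤ), ∑ s₂ ∈ (Finset.Icc (1:ℤ) (N:ℤ)).erase s₁,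
          ∑ t₁ ∈ B s₁, ∑ t₂ ∈ B s₂, a t₁ t₂|
        ≤ ∑ s₁ ∈ Finset.Icc (1:ℤ) (N:ℤ), ∑ s₂ ∈ (Finset.Icc (1:ℤ) (N:ℤ)).erase s₁,
          ∑ t₁ ∈ B s₁, ∑ t₂ ∈ B s₂, |a t₁ t₂| := by
          refine (Finset.abs_sum_le_sum_abs _ _).trans (Finset.sum_le_sum fun s₁ _ => ?_)
          refine (Finset.abs_sum_le_sum_abs _ _).trans (Finset.sum_le_sum fun s₂ _ => ?_)
          exact (Finset.abs_sum_le_sum_abs _ _).trans (Finset.sum_le_sum fun t₁ _ =>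
            Finset.abs_sum_le_sum_abs _ _)
      _ ≤ ∑ s₁ ∈ Finset.Icc (1:ℤ) (N:ℤ), ∑ s₂ ∈ (Finset.Icc (1:ℤ) (N:ℤ)).erase s₁,
          ∑ t₁ ∈ B s₁, ∑ t₂ ∈ B s₂, g t₁ t₂ := by
          refine Finset.sum_le_sum fun s₁ hs₁ => Finset.sum_le_sum fun s₂ hs₂ => ?_
          refine Finset.sum_le_sum fun t₁ ht₁ => Finset.sum_le_sum fun t₂ ht₂ => ?_
          exact ha t₁ (hBsub s₁ hs₁ ht₁) t₂
            (hBsub s₂ (Finset.mem_of_mem_erase hs₂) ht₂)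
      _ ≤ ∑ s₁ ∈ Finset.Icc (1:ℤ) (N:ℤ), 2 * (C * Stmt15Aux.S ϖ) :=
          Finset.sum_le_sum hkey
      _ = (N:ℝ) * (2 * (C * Stmt15Aux.S ϖ)) := by
          rw [Finset.sum_const, Int.card_Icc]
          have : ((N:ℤ) + 1 - 1).toNat = N := by omega
          rw [this, nsmul_eq_mul]
  calc ((N*b : ℕ) : ℝ)⁻¹ *
        |(∑ t₁ ∈ Finset.Icc (1:ℤ) ((N*b : ℕ) : ℤ),
            ∑ t₂ ∈ Finset.Icc (1:ℤ) ((N*b : ℕ) : ℤ), a t₁ t₂)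
          - ∑ s ∈ Finset.Icc (1:ℤ) (N:ℤ), ∑ t₁ ∈ B s, ∑ t₂ ∈ B s, a t₁ t₂|
      ≤ ((N*b : ℕ) : ℝ)⁻¹ * ((N:ℝ) * (2 * (C * Stmt15Aux.S ϖ))) := by
        refine mul_le_mul_of_nonneg_left habs ?_
        positivity
    _ = 2 * (C * Stmt15Aux.S ϖ) / (b:ℝ) := by
        have hbR : (0:ℝ) < (b:ℝ) := by exact_mod_cast hb
        have hNR : (0:ℝ) < (N:ℝ) := by exact_mod_cast hN
        rw [show ((N*b : ℕ) : ℝ) = (N:ℝ) * (b:ℝ) by push_cast; ring]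
        field_simp


/-- **Block-diagonal covariance approximation.** For `ϖ > 0` and `C ≥ 0` there is a
constant `K` (depending only on `C, ϖ`) such that for all block lengths `b ≥ 1`, block
counts `N ≥ 1`, with `n = N·b`, and every array `a` with
`|a(t₁,t₂)| ≤ C (|t₁−t₂| ∨ 1)^{−2−ϖ}`, the normalized block-diagonal approximation error
`(1/n)|Σ_{t₁,t₂=1}^n a(t₁,t₂) − Σ_{s=1}^N Σ_{t₁,t₂∈B_s} a(t₁,t₂)|` is at most `K/b`. -/
theorem stmt_15 (ϖ C : ℝ) (hϖ : 0 < ϖ) (hC : 0 ≤ C) :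
    ∃ K : ℝ, ∀ b N : ℕ, 1 ≤ b → 1 ≤ N →
      ∀ a : ℤ → ℤ → ℝ,
        (∀ t₁ ∈ Finset.Icc (1:ℤ) ((N*b : ℕ) : ℤ), ∀ t₂ ∈ Finset.Icc (1:ℤ) ((N*b : ℕ) : ℤ),
          |a t₁ t₂| ≤ C * ((max |t₁ - t₂| 1 : ℤ) : ℝ) ^ (-(2 + ϖ))) →
        ((N*b : ℕ) : ℝ)⁻¹ *
          |(∑ t₁ ∈ Finset.Icc (1:ℤ) ((N*b : ℕ) : ℤ),
              ∑ t₂ ∈ Finset.Icc (1:ℤ) ((N*b : ℕ) : ℤ), a t₁ t₂)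
            - ∑ s ∈ Finset.Icc (1:ℤ) (N:ℤ),
                ∑ t₁ ∈ Finset.Icc ((s-1)*(b:ℤ)+1) (s*(b:ℤ)),
                  ∑ t₂ ∈ Finset.Icc ((s-1)*(b:ℤ)+1) (s*(b:ℤ)), a t₁ t₂|
          ≤ K / b := by
  exact Stmt15Aux.main ϖ C hϖ hC (Stmt15Aux.U_bound ϖ C hϖ hC)
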